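/- arXiv:2509.02429 — 2 statements merged into one kernel-verified Lean document; each statement's English description precedes it below -/
import Mathlib

section
/- Block encoding of the central first-order difference operator: let U = (H ⊗ I_N) · (P₁ ⊗ S₊ + P₀ ⊗ I_N) · (P₀ ⊗ S₋ + P₁ ⊗ I_N) · (Z ⊗ I_N) · (H ⊗ I_N), a 2N×2N matrix indexed by Fin 2 × Fin N. Then for all j, k ∈ Fin N, U((0,j),(0,k)) = (D̃₁)_{jk}, where D̃₁ = (1/2)(S₋ − S₊) = h·D₁ with D₁ = (1/(2h))(S₋ − S₊) the central finite-difference approximation of d/dx with periodic boundary conditions. -/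
open Matrix Kronecker

noncomputable section

/-- Cyclic shift matrix `S₊`: `(S₊)_{jk} = 1` iff `j ≡ k+1 (mod N)`. -/
def Sp (N : ℕ) [NeZero N] : Matrix (Fin N) (Fin N) ℂ :=
  Matrix.of fun j k => if j = k + 1 then 1 else 0

/-- Cyclic shift matrix `S₋ = S₊ᵀ`. -/
def Sm (N : ℕ) [NeZero N] : Matrix (Fin N) (Fin N) ℂ := (Sp N)ᵀ

def P0 : Matrix (Fin 2) (Fin 2) ℂ := !![1, 0; 0, 0]
def P1 : Matrix (Fin 2) (Fin 2) ℂ := !![0, 0; 0, 1]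
def Hg : Matrix (Fin 2) (Fin 2) ℂ := ((Real.sqrt 2 : ℝ) : ℂ)⁻¹ • !![1, 1; 1, -1]
def Zg : Matrix (Fin 2) (Fin 2) ℂ := !![1, 0; 0, -1]

/-- `D̃₁ = (1/2)(S₋ − S₊) = h·D₁`, the scaled central finite-difference approximation
of `d/dx` with periodic boundary conditions. -/
def Dt1 (N : ℕ) [NeZero N] : Matrix (Fin N) (Fin N) ℂ :=
  (1 / 2 : ℂ) • (Sm N - Sp N)

/-! Since `P₀, P₁` are orthogonal idempotents, the two controlled shifts multiply to
`P₁ ⊗ S₊ + P₀ ⊗ S₋`. Conjugating by the single-qubit gates then gives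
`U = (H P₁ Z H) ⊗ S₊ + (H P₀ Z H) ⊗ S₋`, whose `(0, 0)` qubit entries are `-1/2` and `1/2`. -/

section Kronecker

variable {R m n : Type*} [CommRing R] [Fintype m] [Fintype n] [DecidableEq n]

theorem kronecker_controlled_mul_controlled {P Q : Matrix m m R} (hPQ : P * Q = 0)
    (hQP : Q * P = 0) (hP : P * P = P) (hQ : Q * Q = Q) (A B : Matrix n n R) :
    (Q ⊗ₖ A + P ⊗ₖ 1) * (P ⊗ₖ B + Q ⊗ₖ 1) = Q ⊗ₖ A + P ⊗ₖ B := by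
  simp only [Matrix.add_mul, Matrix.mul_add, ← mul_kronecker_mul, hPQ, hQP, hP, hQ,
    zero_kronecker, Matrix.mul_one, Matrix.one_mul, zero_add, add_zero]
  exact add_comm _ _

theorem kronecker_one_mul_add_mul_kronecker_one (L X Y R' : Matrix m m R) (A B : Matrix n n R) :
    (L ⊗ₖ 1) * (X ⊗ₖ A + Y ⊗ₖ B) * (R' ⊗ₖ 1) = (L * X * R') ⊗ₖ A + (L * Y * R') ⊗ₖ B := by
  simp only [Matrix.mul_add, Matrix.add_mul, ← mul_kronecker_mul, Matrix.mul_one, Matrix.one_mul]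

end Kronecker

theorem P0_mul_P1 : P0 * P1 = 0 := by
  ext i j; fin_cases i <;> fin_cases j <;> simp [P0, P1]

theorem P1_mul_P0 : P1 * P0 = 0 := by
  ext i j; fin_cases i <;> fin_cases j <;> simp [P0, P1]

theorem P0_mul_self : P0 * P0 = P0 := by
  ext i j; fin_cases i <;> fin_cases j <;> simp [P0]

theorem P1_mul_self : P1 * P1 = P1 := by
  ext i j; fin_cases i <;> fin_cases j <;> simp [P1]

theorem inv_sqrt_two_mul_self : ((√2 : ℝ) : ℂ)⁻¹ * ((√2 : ℝ) : ℂ)⁻¹ = 1 / 2 := by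
  rw [← mul_inv, ← Complex.ofReal_mul, Real.mul_self_sqrt zero_le_two]
  norm_num

theorem Hg_mul_P0_mul_Zg_mul_Hg_zero_zero : (Hg * P0 * (Zg * Hg)) 0 0 = 1 / 2 := by
  simp [Hg, P0, Zg, inv_sqrt_two_mul_self]

theorem Hg_mul_P1_mul_Zg_mul_Hg_zero_zero : (Hg * P1 * (Zg * Hg)) 0 0 = -(1 / 2) := by
  simp [Hg, P1, Zg, inv_sqrt_two_mul_self]

theorem stmt_13_general (N : ℕ) [NeZero N]
    (U : Matrix (Fin 2 × Fin N) (Fin 2 × Fin N) ℂ)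
    (hU : U = (Hg ⊗ₖ (1 : Matrix (Fin N) (Fin N) ℂ))
      * (P1 ⊗ₖ Sp N + P0 ⊗ₖ (1 : Matrix (Fin N) (Fin N) ℂ))
      * (P0 ⊗ₖ Sm N + P1 ⊗ₖ (1 : Matrix (Fin N) (Fin N) ℂ))
      * (Zg ⊗ₖ (1 : Matrix (Fin N) (Fin N) ℂ))
      * (Hg ⊗ₖ (1 : Matrix (Fin N) (Fin N) ℂ))) :
    ∀ j k : Fin N, U (0, j) (0, k) = Dt1 N j k := by
  intro j k
  have hU' : U = (Hg * P1 * (Zg * Hg)) ⊗ₖ Sp N + (Hg * P0 * (Zg * Hg)) ⊗ₖ Sm N := by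
    rw [hU, mul_assoc _ (Zg ⊗ₖ 1), ← mul_kronecker_mul, Matrix.mul_one, mul_assoc (Hg ⊗ₖ 1),
      kronecker_controlled_mul_controlled P0_mul_P1 P1_mul_P0 P0_mul_self P1_mul_self,
      kronecker_one_mul_add_mul_kronecker_one]
  rw [hU', Matrix.add_apply, kroneckerMap_apply, kroneckerMap_apply,
    Hg_mul_P0_mul_Zg_mul_Hg_zero_zero, Hg_mul_P1_mul_Zg_mul_Hg_zero_zero, Dt1, Matrix.smul_apply,
    Matrix.sub_apply, smul_eq_mul]
  ring

theorem stmt_13 (n : ℕ) (hn : 1 ≤ n) (N : ℕ) (hN : N = 2 ^ n) [NeZero N]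
    (U : Matrix (Fin 2 × Fin N) (Fin 2 × Fin N) ℂ)
    (hU : U = (Hg ⊗ₖ (1 : Matrix (Fin N) (Fin N) ℂ))
      * (P1 ⊗ₖ Sp N + P0 ⊗ₖ (1 : Matrix (Fin N) (Fin N) ℂ))
      * (P0 ⊗ₖ Sm N + P1 ⊗ₖ (1 : Matrix (Fin N) (Fin N) ℂ))
      * (Zg ⊗ₖ (1 : Matrix (Fin N) (Fin N) ℂ))
      * (Hg ⊗ₖ (1 : Matrix (Fin N) (Fin N) ℂ))) :
    ∀ j k : Fin N, U (0, j) (0, k) = Dt1 N j k :=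
  stmt_13_general N U hU
end
end

section
/- Block encoding of the two-dimensional discrete divergence: on ℂ² ⊗ ℂ² ⊗ ℂ^{N²} (qubits ordered ℓ, k, then the system register indexed by Fin N × Fin N with components (j⁽¹⁾, j⁽⁰⁾)) define C₀ = P₀ ⊗ P₀ ⊗ (I_N ⊗ S₋) + (I₄ − P₀ ⊗ P₀) ⊗ I_{N²}, C₁ = P₁ ⊗ P₀ ⊗ (I_N ⊗ S₊) + (I₄ − P₁ ⊗ P₀) ⊗ I_{N²}, C₂ = P₀ ⊗ P₁ ⊗ (S₋ ⊗ I_N) + (I₄ − P₀ ⊗ P₁) ⊗ I_{N²}, C₃ = P₁ ⊗ P₁ ⊗ (S₊ ⊗ I_N) + (I₄ − P₁ ⊗ P₁) ⊗ I_{N²}, and U = (I₂ ⊗ H ⊗ I_{N²}) · (H ⊗ I₂ ⊗ I_{N²}) · C₃ · C₂ · C₁ · C₀ · ((Z·H) ⊗ I₂ ⊗ I_{N²}). Then U block-encodes the discrete divergence with sub-normalization factor 1/√2: for each a ∈ Fin 2 and all r, c ∈ Fin N × Fin N, U((0,0,r),(0,a,c)) = (1/√2)·(D̃⁽ᵃ⁾)_{rc},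 where D̃⁽⁰⁾ = I_N ⊗ D̃₁, D̃⁽¹⁾ = D̃₁ ⊗ I_N, and D̃₁ = (1/2)(S₋ − S₊). -/
open Matrix Kronecker

noncomputable section

/-!
Each `Cᵢ` applies a shift controlled on one of the four ancilla projectors `P_s ⊗ P_d`. These are
mutually orthogonal and sum to `1`, so `C₃ C₂ C₁ C₀` is the multiplexed shift
`∑ (P_s ⊗ P_d) ⊗ S_{sd}`, and conjugating by the one-qubit gates gives
`U = ∑ (H P_s Z H ⊗ H P_d) ⊗ S_{sd}`. In the `(0,0),(0,a)` block, `(H P_d)₀ₐ = δ_{da}/√2` selects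
the direction `a`, and `(H P_s Z H)₀₀ = ±1/2` supplies the signs of `½(S₋ − S₊)`.
-/

namespace Matrix

theorem sub_kronecker {R l m n p : Type*} [NonUnitalNonAssocRing R]
    (A B : Matrix l m R) (C : Matrix n p R) : (A - B) ⊗ₖ C = A ⊗ₖ C - B ⊗ₖ C := by
  ext; simp [sub_mul]

variable {R α β : Type*} [CommRing R] [Fintype α] [DecidableEq α] [Fintype β] [DecidableEq β]

def controlled (Q : Matrix α α R) (S : Matrix β β R) : Matrix (α × β) (α × β) R :=
  Q ⊗ₖ S + (1 - Q) ⊗ₖ 1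

theorem controlled_mul {Q P : Matrix α α R} (S : Matrix β β R) (Y : Matrix (α × β) (α × β) R)
    (hY : (Q ⊗ₖ (1 : Matrix β β R)) * Y = 0) (hQP : Q * P = 0) :
    controlled Q S * (Y + (1 - P) ⊗ₖ 1) = Q ⊗ₖ S + Y + (1 - (Q + P)) ⊗ₖ 1 := by
  have hSY : (Q ⊗ₖ S) * Y = 0 := by
    rw [← one_mul Q, ← mul_one S, mul_kronecker_mul, mul_assoc, hY, mul_zero]
  have hSP : (Q ⊗ₖ S) * ((1 - P) ⊗ₖ 1) = Q ⊗ₖ S := by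
    rw [← mul_kronecker_mul, mul_sub, hQP, mul_one, sub_zero, mul_one]
  have hY' : ((1 - Q) ⊗ₖ (1 : Matrix β β R)) * Y = Y := by
    rw [sub_kronecker, one_kronecker_one, sub_mul, hY, one_mul, sub_zero]
  have hP : ((1 - Q) ⊗ₖ (1 : Matrix β β R)) * ((1 - P) ⊗ₖ 1) = (1 - (Q + P)) ⊗ₖ 1 := by
    rw [← mul_kronecker_mul, sub_mul, one_mul, mul_sub, hQP, mul_one, mul_one]
    congr 1; abel
  rw [controlled, add_mul, mul_add, mul_add, hSY, hSP, hY', hP]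
  abel

theorem list_prod_map_controlled (l : List (Matrix α α R × Matrix β β R))
    (hl : l.Pairwise fun x y => x.1 * y.1 = 0) :
    (l.map fun x => controlled x.1 x.2).prod
      = (l.map fun x => x.1 ⊗ₖ x.2).sum + (1 - (l.map Prod.fst).sum) ⊗ₖ 1 := by
  induction l with
  | nil => simp
  | cons x l ih =>
    obtain ⟨hx, hl⟩ := List.pairwise_cons.mp hl
    have hY : (x.1 ⊗ₖ (1 : Matrix β β R)) * (l.map fun y => y.1 ⊗ₖ y.2).sum = 0 := by
      rw [← List.sum_map_mul_left, List.sum_eq_zero]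
      simp only [List.mem_map]
      rintro _ ⟨y, hy, rfl⟩
      rw [← mul_kronecker_mul, hx y hy, zero_kronecker]
    have hQP : x.1 * (l.map Prod.fst).sum = 0 := by
      rw [← List.sum_map_mul_left, List.sum_eq_zero]
      simp only [List.mem_map]
      rintro _ ⟨y, hy, rfl⟩
      exact hx y hy
    rw [List.map_cons, List.prod_cons, ih hl, controlled_mul _ _ hY hQP]
    simp only [List.map_cons, List.sum_cons, add_assoc]

end Matrix

theorem P0_add_P1 : P0 + P1 = 1 := by
  ext i j; fin_cases i <;> fin_cases j <;> simp [P0, P1]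

theorem ofReal_sqrt_two_inv_mul_self : ((Real.sqrt 2 : ℝ) : ℂ)⁻¹ * ((Real.sqrt 2 : ℝ) : ℂ)⁻¹ = 2⁻¹ := by
  rw [← mul_inv, ← Complex.ofReal_mul, Real.mul_self_sqrt zero_le_two, Complex.ofReal_ofNat]

theorem Hg_mul_P0 : Hg * P0 = ((Real.sqrt 2 : ℝ) : ℂ)⁻¹ • !![1, 0; 1, 0] := by
  ext i j; fin_cases i <;> fin_cases j <;> simp [Hg, P0]

theorem Hg_mul_P1 : Hg * P1 = ((Real.sqrt 2 : ℝ) : ℂ)⁻¹ • !![0, 1; 0, -1] := by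
  ext i j; fin_cases i <;> fin_cases j <;> simp [Hg, P1]

theorem Hg_mul_P0_mul_Zg_mul_Hg : Hg * P0 * (Zg * Hg) = (2 : ℂ)⁻¹ • !![1, 1; 1, 1] := by
  rw [Hg_mul_P0]
  ext i j; fin_cases i <;> fin_cases j <;> simp [Hg, Zg, ← ofReal_sqrt_two_inv_mul_self]

theorem Hg_mul_P1_mul_Zg_mul_Hg : Hg * P1 * (Zg * Hg) = (2 : ℂ)⁻¹ • !![-1, 1; 1, -1] := by
  rw [Hg_mul_P1]
  ext i j; fin_cases i <;> fin_cases j <;> simp [Hg, Zg, ← ofReal_sqrt_two_inv_mul_self]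

theorem controlled_shifts_mul (N : ℕ) [NeZero N] :
    controlled (P1 ⊗ₖ P1) (Sp N ⊗ₖ (1 : Matrix (Fin N) (Fin N) ℂ))
        * (controlled (P0 ⊗ₖ P1) (Sm N ⊗ₖ 1)
        * (controlled (P1 ⊗ₖ P0) (1 ⊗ₖ Sp N) * controlled (P0 ⊗ₖ P0) (1 ⊗ₖ Sm N)))
      = P1 ⊗ₖ P1 ⊗ₖ (Sp N ⊗ₖ 1) + P0 ⊗ₖ P1 ⊗ₖ (Sm N ⊗ₖ 1)
        + P1 ⊗ₖ P0 ⊗ₖ (1 ⊗ₖ Sp N) + P0 ⊗ₖ P0 ⊗ₖ (1 ⊗ₖ Sm N) := by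
  have h := list_prod_map_controlled [(P1 ⊗ₖ P1, Sp N ⊗ₖ (1 : Matrix (Fin N) (Fin N) ℂ)),
    (P0 ⊗ₖ P1, Sm N ⊗ₖ 1), (P1 ⊗ₖ P0, 1 ⊗ₖ Sp N), (P0 ⊗ₖ P0, 1 ⊗ₖ Sm N)]
    (by simp [← mul_kronecker_mul, P0_mul_P1, P1_mul_P0])
  have hsum : P1 ⊗ₖ P1 + (P0 ⊗ₖ P1 + (P1 ⊗ₖ P0 + P0 ⊗ₖ P0)) = 1 := by
    rw [← one_kronecker_one, ← P0_add_P1, add_kronecker, kronecker_add, kronecker_add]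
    abel
  simp only [List.map_cons, List.map_nil, List.prod_cons, List.prod_nil, List.sum_cons,
    List.sum_nil, add_zero, mul_one, hsum, sub_self, zero_kronecker] at h
  rw [h, add_assoc, add_assoc]

theorem stmt_15_general (N : ℕ) [NeZero N]
    (C0 C1 C2 C3 U : Matrix ((Fin 2 × Fin 2) × (Fin N × Fin N)) ((Fin 2 × Fin 2) × (Fin N × Fin N)) ℂ)
    (hC0 : C0 = P0 ⊗ₖ P0 ⊗ₖ ((1 : Matrix (Fin N) (Fin N) ℂ) ⊗ₖ Sm N)
      + ((1 : Matrix (Fin 2 × Fin 2) (Fin 2 × Fin 2) ℂ) - P0 ⊗ₖ P0)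
          ⊗ₖ (1 : Matrix (Fin N × Fin N) (Fin N × Fin N) ℂ))
    (hC1 : C1 = P1 ⊗ₖ P0 ⊗ₖ ((1 : Matrix (Fin N) (Fin N) ℂ) ⊗ₖ Sp N)
      + ((1 : Matrix (Fin 2 × Fin 2) (Fin 2 × Fin 2) ℂ) - P1 ⊗ₖ P0)
          ⊗ₖ (1 : Matrix (Fin N × Fin N) (Fin N × Fin N) ℂ))
    (hC2 : C2 = P0 ⊗ₖ P1 ⊗ₖ (Sm N ⊗ₖ (1 : Matrix (Fin N) (Fin N) ℂ))
      + ((1 : Matrix (Fin 2 × Fin 2) (Fin 2 × Fin 2) ℂ) - P0 ⊗ₖ P1)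
          ⊗ₖ (1 : Matrix (Fin N × Fin N) (Fin N × Fin N) ℂ))
    (hC3 : C3 = P1 ⊗ₖ P1 ⊗ₖ (Sp N ⊗ₖ (1 : Matrix (Fin N) (Fin N) ℂ))
      + ((1 : Matrix (Fin 2 × Fin 2) (Fin 2 × Fin 2) ℂ) - P1 ⊗ₖ P1)
          ⊗ₖ (1 : Matrix (Fin N × Fin N) (Fin N × Fin N) ℂ))
    (hU : U = ((1 : Matrix (Fin 2) (Fin 2) ℂ) ⊗ₖ Hg ⊗ₖ (1 : Matrix (Fin N × Fin N) (Fin N × Fin N) ℂ))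
      * (Hg ⊗ₖ (1 : Matrix (Fin 2) (Fin 2) ℂ) ⊗ₖ (1 : Matrix (Fin N × Fin N) (Fin N × Fin N) ℂ))
      * C3 * C2 * C1 * C0
      * ((Zg * Hg) ⊗ₖ (1 : Matrix (Fin 2) (Fin 2) ℂ) ⊗ₖ (1 : Matrix (Fin N × Fin N) (Fin N × Fin N) ℂ))) :
    ∀ r c : Fin N × Fin N,
      U ((0, 0), r) ((0, 0), c)
        = ((Real.sqrt 2 : ℝ) : ℂ)⁻¹ * ((1 : Matrix (Fin N) (Fin N) ℂ) ⊗ₖ Dt1 N) r c ∧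
      U ((0, 0), r) ((0, 1), c)
        = ((Real.sqrt 2 : ℝ) : ℂ)⁻¹ * (Dt1 N ⊗ₖ (1 : Matrix (Fin N) (Fin N) ℂ)) r c := by
  have hprod : C3 * C2 * C1 * C0 = P1 ⊗ₖ P1 ⊗ₖ (Sp N ⊗ₖ 1) + P0 ⊗ₖ P1 ⊗ₖ (Sm N ⊗ₖ 1)
      + P1 ⊗ₖ P0 ⊗ₖ (1 ⊗ₖ Sp N) + P0 ⊗ₖ P0 ⊗ₖ (1 ⊗ₖ Sm N) := by
    rw [hC0, hC1, hC2, hC3, mul_assoc, mul_assoc]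
    exact controlled_shifts_mul N
  have hU' : U = (Hg * P1 * (Zg * Hg)) ⊗ₖ (Hg * P1) ⊗ₖ (Sp N ⊗ₖ 1)
      + (Hg * P0 * (Zg * Hg)) ⊗ₖ (Hg * P1) ⊗ₖ (Sm N ⊗ₖ 1)
      + (Hg * P1 * (Zg * Hg)) ⊗ₖ (Hg * P0) ⊗ₖ (1 ⊗ₖ Sp N)
      + (Hg * P0 * (Zg * Hg)) ⊗ₖ (Hg * P0) ⊗ₖ (1 ⊗ₖ Sm N) := by
    have hHH : (1 ⊗ₖ Hg ⊗ₖ (1 : Matrix (Fin N × Fin N) (Fin N × Fin N) ℂ)) * (Hg ⊗ₖ 1 ⊗ₖ 1)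
        = Hg ⊗ₖ Hg ⊗ₖ 1 := by
      rw [← mul_kronecker_mul, ← mul_kronecker_mul, one_mul, mul_one, mul_one]
    rw [hU, hHH, mul_assoc _ C3, mul_assoc _ (C3 * C2), mul_assoc _ (C3 * C2 * C1), hprod]
    simp only [mul_add, add_mul, ← mul_kronecker_mul, mul_one, one_mul]
  intro r c
  rw [hU', Hg_mul_P0_mul_Zg_mul_Hg, Hg_mul_P1_mul_Zg_mul_Hg, Hg_mul_P0, Hg_mul_P1]
  constructor <;> simp [Dt1] <;> ring

theorem stmt_15 (n : ℕ) (hn : 1 ≤ n) (N : ℕ) (hN : N = 2 ^ n) [NeZero N]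
    (C0 C1 C2 C3 U : Matrix ((Fin 2 × Fin 2) × (Fin N × Fin N)) ((Fin 2 × Fin 2) × (Fin N × Fin N)) ℂ)
    (hC0 : C0 = P0 ⊗ₖ P0 ⊗ₖ ((1 : Matrix (Fin N) (Fin N) ℂ) ⊗ₖ Sm N)
      + ((1 : Matrix (Fin 2 × Fin 2) (Fin 2 × Fin 2) ℂ) - P0 ⊗ₖ P0)
          ⊗ₖ (1 : Matrix (Fin N × Fin N) (Fin N × Fin N) ℂ))
    (hC1 : C1 = P1 ⊗ₖ P0 ⊗ₖ ((1 : Matrix (Fin N) (Fin N) ℂ) ⊗ₖ Sp N)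
      + ((1 : Matrix (Fin 2 × Fin 2) (Fin 2 × Fin 2) ℂ) - P1 ⊗ₖ P0)
          ⊗ₖ (1 : Matrix (Fin N × Fin N) (Fin N × Fin N) ℂ))
    (hC2 : C2 = P0 ⊗ₖ P1 ⊗ₖ (Sm N ⊗ₖ (1 : Matrix (Fin N) (Fin N) ℂ))
      + ((1 : Matrix (Fin 2 × Fin 2) (Fin 2 × Fin 2) ℂ) - P0 ⊗ₖ P1)
          ⊗ₖ (1 : Matrix (Fin N × Fin N) (Fin N × Fin N) ℂ))
    (hC3 : C3 = P1 ⊗ₖ P1 ⊗ₖ (Sp N ⊗ₖ (1 : Matrix (Fin N) (Fin N) ℂ))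
      + ((1 : Matrix (Fin 2 × Fin 2) (Fin 2 × Fin 2) ℂ) - P1 ⊗ₖ P1)
          ⊗ₖ (1 : Matrix (Fin N × Fin N) (Fin N × Fin N) ℂ))
    (hU : U = ((1 : Matrix (Fin 2) (Fin 2) ℂ) ⊗ₖ Hg ⊗ₖ (1 : Matrix (Fin N × Fin N) (Fin N × Fin N) ℂ))
      * (Hg ⊗ₖ (1 : Matrix (Fin 2) (Fin 2) ℂ) ⊗ₖ (1 : Matrix (Fin N × Fin N) (Fin N × Fin N) ℂ))
      * C3 * C2 * C1 * C0
      * ((Zg * Hg) ⊗ₖ (1 : Matrix (Fin 2) (Fin 2) ℂ) ⊗ₖ (1 : Matrix (Fin N × Fin N) (Fin N × Fin N) ℂ))) :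
    ∀ r c : Fin N × Fin N,
      U ((0, 0), r) ((0, 0), c)
        = ((Real.sqrt 2 : ℝ) : ℂ)⁻¹ * ((1 : Matrix (Fin N) (Fin N) ℂ) ⊗ₖ Dt1 N) r c ∧
      U ((0, 0), r) ((0, 1), c)
        = ((Real.sqrt 2 : ℝ) : ℂ)⁻¹ * (Dt1 N ⊗ₖ (1 : Matrix (Fin N) (Fin N) ℂ)) r c :=
  stmt_15_general N C0 C1 C2 C3 U hC0 hC1 hC2 hC3 hU
end
end
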